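/- arXiv:1303.2881 — 2 statements merged into one kernel-verified Lean document; each statement's English description precedes it below -/
import Mathlib

section
/- Let p be a prime with p ≡ 1 (mod 4), and let a, b be nonzero integers with a² + b² = p. Then the complex number (a + bi)/√p is not a root of unity; equivalently, writing a + bi = √p·e^{iθ}, the angle θ is not a rational multiple of π. -/
/-!
If z = (a + bi)/√p were a root of unity, it would be an algebraic integer, and so would
z + z̄ = 2a/√p and its square 4a²/p. A rational algebraic integer is an integer, so the odd
prime p divides a; but then p² ≤ a² ≤ a² + b² = p.
-/

open scoped Real ComplexConjugate

lemma Complex.isIntegral_two_mul_re {z : ℂ} (hz : IsIntegral ℤ z) : IsIntegral ℤ (2 * z.re) := by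
  have hconj : IsIntegral ℤ (conj z) := hz.map (starRingEnd ℂ).toIntAlgHom
  rw [← isIntegral_algebraMap_iff (algebraMap ℝ ℂ).injective, Complex.coe_algebraMap,
    ← Complex.add_conj]
  exact hz.add hconj

lemma exists_int_eq_of_isIntegral_ratCast {K : Type*} [Field K] [CharZero K] {q : ℚ}
    (hq : IsIntegral ℤ (q : K)) : ∃ m : ℤ, q = m := by
  rw [← eq_ratCast (algebraMap ℚ K), isIntegral_algebraMap_iff (algebraMap ℚ K).injective,
    IsIntegrallyClosed.isIntegral_iff] at hq
  obtain ⟨m, hm⟩ := hq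
  exact ⟨m, by simpa using hm.symm⟩

lemma not_dvd_four_mul_sq_of_sq_add_sq_eq {p : ℕ} (hp : p.Prime) (hp2 : p ≠ 2) {a b : ℤ}
    (ha : a ≠ 0) (hab : a ^ 2 + b ^ 2 = p) : ¬ (p : ℤ) ∣ 4 * a ^ 2 := by
  intro hdvd
  have hpa : (p : ℤ) ∣ a := by
    rcases Int.Prime.dvd_mul' hp hdvd with h4 | ha2
    · have : p ∣ 2 ^ 2 := by exact_mod_cast h4
      exact absurd ((Nat.prime_dvd_prime_iff_eq hp Nat.prime_two).mp (hp.dvd_of_dvd_pow this)) hp2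
    · exact Int.Prime.dvd_pow' hp ha2
  have hpa2 : (p : ℤ) ^ 2 ≤ a ^ 2 := Int.le_of_dvd (by positivity) (pow_dvd_pow_of_dvd hpa 2)
  have hp1 : (1 : ℤ) < p := by exact_mod_cast hp.one_lt
  nlinarith [sq_nonneg b]

theorem statement9_general (p : ℕ) (hp : p.Prime) (hp4 : p % 4 = 1) (a b : ℤ)
    (ha : a ≠ 0) (hab : a ^ 2 + b ^ 2 = (p : ℤ)) :
    ¬ ∃ n : ℕ, 0 < n ∧ (((a : ℂ) + (b : ℂ) * Complex.I) / ((Real.sqrt p : ℝ) : ℂ)) ^ n = 1 := by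
  rintro ⟨n, hn, hzn⟩
  set z : ℂ := ((a : ℂ) + (b : ℂ) * Complex.I) / ((Real.sqrt p : ℝ) : ℂ)
  have hz : IsIntegral ℤ z := IsIntegral.of_pow hn (hzn ▸ isIntegral_one)
  have hre_sq : (2 * z.re) ^ 2 = ((4 * a ^ 2 / p : ℚ) : ℝ) := by
    simp only [z, Complex.div_ofReal_re, Complex.add_re, Complex.intCast_re, Complex.mul_I_re,
      Complex.intCast_im, neg_zero, add_zero]
    rw [mul_pow, div_pow, Real.sq_sqrt (Nat.cast_nonneg p)]
    push_cast
    ring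
  obtain ⟨m, hm⟩ := exists_int_eq_of_isIntegral_ratCast
    (hre_sq ▸ (Complex.isIntegral_two_mul_re hz).pow 2)
  refine not_dvd_four_mul_sq_of_sq_add_sq_eq hp (by omega) ha hab ⟨m, ?_⟩
  rw [div_eq_iff (by exact_mod_cast hp.ne_zero)] at hm
  exact_mod_cast hm.trans (mul_comm _ _)

/-- for a prime p ≡ 1 (mod 4) with p = a² + b², the number (a+bi)/√p is
not a root of unity. -/
theorem statement9 (p : ℕ) (hp : p.Prime) (hp4 : p % 4 = 1) (a b : ℤ)
    (ha : a ≠ 0) (hb : b ≠ 0) (hab : a ^ 2 + b ^ 2 = (p : ℤ)) :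
    ¬ ∃ n : ℕ, 0 < n ∧ (((a : ℂ) + (b : ℂ) * Complex.I) / ((Real.sqrt p : ℝ) : ℂ)) ^ n = 1 :=
  statement9_general p hp hp4 a b ha hab
end

section
/- For every integer ℓ ≥ 3 there is a constant C(ℓ) depending only on ℓ such that the following holds. Let 0 < γ < 1/2 and let 𝓔 ⊂ ℤ² ∖ {0} be a finite set with |𝓔| = W ≥ 2, such that for every integer ℓ' with 3 ≤ ℓ' ≤ ℓ the number of non-degenerate ℓ'-tuples (ξ_1, …, ξ_{ℓ'}) ∈ 𝓔^{ℓ'} with ξ_1 + ⋯ + ξ_{ℓ'} = 0 is at most W^{γℓ'}. Call an ℓ-tuple (ξ_1, …, ξ_ℓ) ∈ 𝓔^ℓ with ξ_1 + ⋯ + ξ_ℓ = 0 'paired' if ℓ is even and {1, …, ℓ} can be partitioned into ℓ/2 two-element sets {i, j} with ξ_i + ξ_j = 0. Then the number of ℓ-tuples (ξ_1, …, ξ_ℓ) ∈ 𝓔^ℓ with ξ_1 + ⋯ + ξ_ℓ = 0 that are not paired is at most C(ℓ)·W^{ℓ/2 − 3(1/2 − γ)}. -/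
open scoped Real
open Filter MeasureTheory

noncomputable section

/-- Lattice points on the circle of radius √E. -/
def latticePts (E : ℕ) : Finset (ℤ × ℤ) :=
  (Finset.Icc (-(E : ℤ), -(E : ℤ)) ((E : ℤ), (E : ℤ))).filter fun ξ => ξ.1 ^ 2 + ξ.2 ^ 2 = (E : ℤ)

/-- The character x ↦ e(⟨ξ, x⟩) on the torus ℝ²/ℤ². -/
def torusChar (ξ : ℤ × ℤ) (x : AddCircle (1 : ℝ) × AddCircle (1 : ℝ)) : ℂ :=
  AddCircle.toCircle (ξ.1 • x.1 + ξ.2 • x.2)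

/-- The real-valued toral eigenfunction with coefficients `a`. -/
def eigenFun (E : ℕ) (a : ℤ × ℤ → ℂ) (x : AddCircle (1 : ℝ) × AddCircle (1 : ℝ)) : ℝ :=
  (∑ ξ ∈ latticePts E, a ξ * torusChar ξ x).re

/-- Number of nodal domains: connected components of {f ≠ 0}. -/
def nodalCount {X : Type*} [TopologicalSpace X] (f : X → ℝ) : ℕ :=
  Nat.card (ConnectedComponents {x : X // f x ≠ 0})

/-- A tuple is non-degenerate if no proper nonempty sub-sum vanishes. -/
def Nondegenerate {ℓ : ℕ} (v : Fin ℓ → ℤ × ℤ) : Prop :=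
  ∀ s : Finset (Fin ℓ), s.Nonempty → s ≠ Finset.univ → ∑ i ∈ s, v i ≠ 0

/-- Number of non-degenerate ℓ-tuples from 𝓔 summing to zero. -/
def nondegenCount (𝓔 : Finset (ℤ × ℤ)) (ℓ : ℕ) : ℕ :=
  Set.ncard {v : Fin ℓ → ℤ × ℤ | (∀ i, v i ∈ 𝓔) ∧ (∑ i, v i = 0) ∧ Nondegenerate v}

/-- Condition I(γ, B). -/
def CondI (γ : ℝ) (B : ℕ) (E : ℕ) : Prop :=
  ∀ ℓ : ℕ, 2 < ℓ → ℓ ≤ B →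
    (nondegenCount (latticePts E) ℓ : ℝ) ≤ ((latticePts E).card : ℝ) ^ (γ * (ℓ : ℝ))

/-- The set S of odd positive integers all of whose prime factors are ≡ 1 mod 4. -/
def goodE : Set ℕ := {E | Odd E ∧ 0 < E ∧ ∀ p : ℕ, p.Prime → p ∣ E → p % 4 = 1}

/-- Condition (D): equidistribution of 𝓔_{E n}/√(E n) on the unit circle. -/
def CondD (E : ℕ → ℕ) : Prop :=
  ∀ g : C(ℝ × ℝ, ℝ),
    Tendsto (fun n =>
        (∑ ξ ∈ latticePts (E n),
          g ((ξ.1 : ℝ) / Real.sqrt (E n), (ξ.2 : ℝ) / Real.sqrt (E n))) /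
          ((latticePts (E n)).card : ℝ))
      atTop (nhds (∫ θ in (0 : ℝ)..1, g (Real.cos (2 * π * θ), Real.sin (2 * π * θ))))

/-- A zero-sum tuple is paired if its index set splits into two-element blocks {i, j}
with v i + v j = 0 (equivalently, there is a fixed-point-free involution pairing
opposite entries; this forces ℓ to be even). -/
def Paired {ℓ : ℕ} (v : Fin ℓ → ℤ × ℤ) : Prop :=
  ∃ σ : Equiv.Perm (Fin ℓ),
    (∀ i, σ i ≠ i) ∧ (∀ i, σ (σ i) = i) ∧ ∀ i, v i + v (σ i) = 0

/-!
Split a zero-sum tuple along a minimal nonempty zero-sum set of coordinates. This block is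
non-degenerate, it has at least two coordinates because `0 ∉ 𝓔`, and the remaining coordinates
again sum to zero. A block of size 2 is determined by one of its entries (at most `W` choices),
and by hypothesis a block of size `m ≥ 3` has at most `W ^ (γ m) ≤ W ^ (m / 2)` choices; by
induction there are `O(W ^ (n / 2))` zero-sum `n`-tuples. If the tuple is not paired, then either
its block has size 2 and the rest is again not paired, or the block has size `m ≥ 3` and costs
`W ^ (m / 2 - m (1 / 2 - γ)) ≤ W ^ (m / 2 - 3 (1 / 2 - γ))`, the saving in the theorem. The
constant only has to absorb the number of ways to choose the blocks.
-/

open Finset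

section ZeroSumTuples

variable {ι G : Type*} [AddCommGroup G]

-- A tuple on the coordinates `s` is a function on the ambient index type `ι` vanishing off `s`,
-- so that all the sub-tuples met in the recursion live in the same type.
def zeroSumOn (𝓔 : Finset G) (s : Finset ι) : Set (ι → G) :=
  {v | (∀ i ∈ s, v i ∈ 𝓔) ∧ (∀ i ∉ s, v i = 0) ∧ ∑ i ∈ s, v i = 0}

def nondegZeroSumOn (𝓔 : Finset G) (t : Finset ι) : Set (ι → G) :=
  {v ∈ zeroSumOn 𝓔 t | ∀ t' ⊂ t, t'.Nonempty → ∑ i ∈ t', v i ≠ 0}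

def PairedOn (s : Finset ι) (v : ι → G) : Prop :=
  ∃ σ : ι → ι, ∀ i ∈ s, σ i ∈ s ∧ σ i ≠ i ∧ σ (σ i) = i ∧ v i + v (σ i) = 0

def unpairedZeroSumOn (𝓔 : Finset G) (s : Finset ι) : Set (ι → G) :=
  {v ∈ zeroSumOn 𝓔 s | ¬ PairedOn s v}

variable {𝓔 : Finset G} {s t : Finset ι} {v w : ι → G}

theorem zeroSumOn_finite [Finite ι] (𝓔 : Finset G) (s : Finset ι) : (zeroSumOn 𝓔 s).Finite := by
  classical
  refine (Set.Finite.pi (t := fun _ => ((insert 0 𝓔 : Finset G) : Set G))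
    fun _ => finite_toSet _).subset fun v hv i _ => ?_
  by_cases hi : i ∈ s
  · simp [hv.1 i hi]
  · simp [hv.2.1 i hi]

theorem zeroSumOn_empty (𝓔 : Finset G) : zeroSumOn 𝓔 (∅ : Finset ι) = {0} := by
  ext v
  simp [zeroSumOn, funext_iff]

theorem indicator_mem_zeroSumOn (hv : ∀ i ∈ t, v i ∈ 𝓔) (hsum : ∑ i ∈ t, v i = 0) :
    (t : Set ι).indicator v ∈ zeroSumOn 𝓔 t := by
  refine ⟨fun i hi => ?_, fun i hi => Set.indicator_of_notMem hi v, ?_⟩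
  · simpa [Set.indicator_of_mem (mem_coe.2 hi)] using hv i hi
  · rwa [sum_congr rfl fun i hi => Set.indicator_of_mem (mem_coe.2 hi) v]

theorem ncard_zeroSumOn_le_of_card_eq_two (ht : #t = 2) : (zeroSumOn 𝓔 t).ncard ≤ #𝓔 := by
  classical
  obtain ⟨i, j, hij, rfl⟩ := card_eq_two.1 ht
  rw [← Set.ncard_coe_finset]
  refine Set.ncard_le_ncard_of_injOn (fun v => v i) (fun v hv => hv.1 i (by simp)) ?_
    𝓔.finite_toSet
  intro v hv w hw (hvw : v i = w i)
  have hvj : v j = -v i := eq_neg_of_add_eq_zero_right ((sum_pair hij).symm.trans hv.2.2)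
  have hwj : w j = -w i := eq_neg_of_add_eq_zero_right ((sum_pair hij).symm.trans hw.2.2)
  funext x
  by_cases hxi : x = i
  · rwa [hxi]
  by_cases hxj : x = j
  · rw [hxj, hvj, hwj, hvw]
  have hx : x ∉ ({i, j} : Finset ι) := by simp [hxi, hxj]
  rw [hv.2.1 x hx, hw.2.1 x hx]

theorem pairedOn_empty (v : ι → G) : PairedOn ∅ v := ⟨id, by simp⟩

theorem PairedOn.congr (h : PairedOn s v) (hvw : ∀ i ∈ s, v i = w i) : PairedOn s w := by
  obtain ⟨σ, hσ⟩ := h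
  refine ⟨σ, fun i hi => ?_⟩
  obtain ⟨hσs, hσi, hσσ, hsum⟩ := hσ i hi
  exact ⟨hσs, hσi, hσσ, by rwa [← hvw i hi, ← hvw _ hσs]⟩

theorem PairedOn.pair_union [DecidableEq ι] {i j : ι} (h : PairedOn s v) (hi : i ∉ s)
    (hj : j ∉ s) (hij : i ≠ j) (hv : v i + v j = 0) : PairedOn ({i, j} ∪ s) v := by
  obtain ⟨σ, hσ⟩ := h
  refine ⟨fun x => if x = i then j else if x = j then i else σ x, fun x hx => ?_⟩
  by_cases hxi : x = i
  · subst hxi; simp [hij.symm, hv]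
  by_cases hxj : x = j
  · subst hxj; simp [hij, hij.symm, hv, add_comm]
  have hxs : x ∈ s := by simpa [hxi, hxj] using hx
  obtain ⟨hσs, hσx, hσσ, hsum⟩ := hσ x hxs
  have hσi : σ x ≠ i := fun h => hi (h ▸ hσs)
  have hσj : σ x ≠ j := fun h => hj (h ▸ hσs)
  simp [hxi, hxj, hσi, hσj, hσs, hσx, hσσ, hsum]

theorem exists_nondegZeroSumOn_block [DecidableEq ι] (h0 : (0 : G) ∉ 𝓔) (hs : s.Nonempty)
    (hv : v ∈ zeroSumOn 𝓔 s) :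
    ∃ t ⊆ s, 2 ≤ #t ∧ (t : Set ι).indicator v ∈ nondegZeroSumOn 𝓔 t ∧
      ((s \ t : Finset ι) : Set ι).indicator v ∈ zeroSumOn 𝓔 (s \ t) := by
  classical
  obtain ⟨t, ht, hmin⟩ := (s.powerset.filter fun t => t.Nonempty ∧ ∑ i ∈ t, v i = 0)
    |>.exists_min_image card ⟨s, by simp [hs, hv.2.2]⟩
  simp only [mem_filter, mem_powerset] at ht hmin
  obtain ⟨hts, htne, htsum⟩ := ht
  have hvt : ∀ i ∈ t, v i ∈ 𝓔 := fun i hi => hv.1 i (hts hi)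
  have ht2 : 2 ≤ #t := by
    by_contra! h
    obtain ⟨i, rfl⟩ := card_eq_one.1 (show #t = 1 by have := htne.card_pos; omega)
    rw [sum_singleton] at htsum
    exact h0 (htsum ▸ hvt i (mem_singleton_self i))
  refine ⟨t, hts, ht2, ⟨indicator_mem_zeroSumOn hvt htsum, fun t' ht't ht'ne hsum => ?_⟩,
    indicator_mem_zeroSumOn (fun i hi => hv.1 i (mem_sdiff.1 hi).1) ?_⟩
  · rw [sum_congr rfl fun i hi => Set.indicator_of_mem (mem_coe.2 (ht't.subset hi)) v] at hsum
    exact absurd (hmin t' ⟨ht't.subset.trans hts, ht'ne, hsum⟩) (not_le.2 (card_lt_card ht't))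
  · rw [sum_sdiff_eq_sub hts, hv.2.2, htsum, sub_zero]

theorem indicator_add_indicator_sdiff_of_mem_zeroSumOn [DecidableEq ι]
    (hv : v ∈ zeroSumOn 𝓔 s) :
    (t : Set ι).indicator v + ((s \ t : Finset ι) : Set ι).indicator v = v := by
  funext i
  by_cases hit : i ∈ t
  · simp [hit]
  by_cases his : i ∈ s
  · simp [hit, his]
  · simp [hit, his, hv.2.1 i his]

theorem ncard_le_sum_of_exists_block [Finite ι] [DecidableEq ι] {F : Set (ι → G)}
    (hF : F ⊆ zeroSumOn 𝓔 s) (R : Finset ι → Set (ι → G)) (hR : ∀ t ⊆ s, (R t).Finite)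
    (hblock : ∀ v ∈ F, ∃ t ⊆ s, 2 ≤ #t ∧ (t : Set ι).indicator v ∈ nondegZeroSumOn 𝓔 t ∧
      ((s \ t : Finset ι) : Set ι).indicator v ∈ R t) :
    F.ncard ≤ ∑ t ∈ s.powerset with 2 ≤ #t, (nondegZeroSumOn 𝓔 t).ncard * (R t).ncard := by
  set piece : Finset ι → Set (ι → G) := fun t => {v ∈ F | (t : Set ι).indicator v ∈
    nondegZeroSumOn 𝓔 t ∧ ((s \ t : Finset ι) : Set ι).indicator v ∈ R t}
  have hcover : F ⊆ ⋃ t ∈ {t ∈ s.powerset | 2 ≤ #t}, piece t := fun v hv => by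
    obtain ⟨t, hts, ht2, hblk⟩ := hblock v hv
    exact Set.mem_biUnion (by simp [hts, ht2]) ⟨hv, hblk⟩
  have hfin : (⋃ t ∈ {t ∈ s.powerset | 2 ≤ #t}, piece t).Finite :=
    (zeroSumOn_finite 𝓔 s).subset (Set.iUnion₂_subset fun _ _ => (Set.sep_subset _ _).trans hF)
  refine (Set.ncard_le_ncard hcover hfin).trans <| (set_ncard_biUnion_le _ _).trans <|
    sum_le_sum fun t ht => ?_
  have hts : t ⊆ s := mem_powerset.1 (mem_filter.1 ht).1
  rw [← Set.ncard_prod]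
  refine Set.ncard_le_ncard_of_injOn (fun v => ((t : Set ι).indicator v,
    ((s \ t : Finset ι) : Set ι).indicator v)) (fun v hv => hv.2) ?_
    (((zeroSumOn_finite 𝓔 t).subset (Set.sep_subset _ _)).prod (hR t hts))
  intro v hv w hw hvw
  simp only [Prod.mk.injEq] at hvw
  rw [← indicator_add_indicator_sdiff_of_mem_zeroSumOn (hF hv.1),
    ← indicator_add_indicator_sdiff_of_mem_zeroSumOn (hF hw.1), hvw.1, hvw.2]

theorem sum_le_pow_mul {α : Type*} {B : Finset α} {f : α → ℝ} {K x : ℝ} {n : ℕ}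
    (hB : (#B : ℝ) ≤ K) (hK : 1 ≤ K) (hx : 0 ≤ x) (hf : ∀ t ∈ B, ∃ m < n, f t ≤ K ^ m * x) :
    ∑ t ∈ B, f t ≤ K ^ n * x := by
  cases n with
  | zero =>
    have hB : B = ∅ := eq_empty_of_forall_notMem fun t ht => by
      obtain ⟨m, hm, -⟩ := hf t ht
      exact Nat.not_lt_zero m hm
    simp [hB, hx]
  | succ n =>
    calc ∑ t ∈ B, f t ≤ ∑ _t ∈ B, K ^ n * x := sum_le_sum fun t ht => by
          obtain ⟨m, hm, hft⟩ := hf t ht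
          exact hft.trans (mul_le_mul_of_nonneg_right (pow_le_pow_right₀ hK (by omega)) hx)
      _ = #B * (K ^ n * x) := by rw [sum_const, nsmul_eq_mul]
      _ ≤ K * (K ^ n * x) := mul_le_mul_of_nonneg_right hB (by positivity)
      _ = K ^ (n + 1) * x := by ring

theorem card_filter_powerset_le_two_pow [Fintype ι] (s : Finset ι) (p : Finset ι → Prop)
    [DecidablePred p] : (#(s.powerset.filter p) : ℝ) ≤ (2 : ℝ) ^ Fintype.card ι := by
  exact_mod_cast (card_filter_le _ _).trans <| (card_powerset s).trans_le <|
    Nat.pow_le_pow_right two_pos (card_le_univ s)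

theorem ncard_zeroSumOn_le [Fintype ι] [DecidableEq ι] (h0 : (0 : G) ∉ 𝓔)
    (hblock : ∀ t : Finset ι, 2 ≤ #t →
      ((nondegZeroSumOn 𝓔 t).ncard : ℝ) ≤ (#𝓔 : ℝ) ^ ((#t : ℝ) / 2))
    (s : Finset ι) :
    ((zeroSumOn 𝓔 s).ncard : ℝ) ≤ ((2 : ℝ) ^ Fintype.card ι) ^ #s * (#𝓔 : ℝ) ^ ((#s : ℝ) / 2) := by
  induction s using Finset.strongInduction with | H s ih =>
  rcases s.eq_empty_or_nonempty with rfl | hs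
  · simp [zeroSumOn_empty]
  calc ((zeroSumOn 𝓔 s).ncard : ℝ)
      ≤ ∑ t ∈ s.powerset with 2 ≤ #t,
          ((nondegZeroSumOn 𝓔 t).ncard : ℝ) * (zeroSumOn 𝓔 (s \ t)).ncard := by
        exact_mod_cast ncard_le_sum_of_exists_block subset_rfl (fun t => zeroSumOn 𝓔 (s \ t))
          (fun t _ => zeroSumOn_finite _ _) fun v hv => exists_nondegZeroSumOn_block h0 hs hv
    _ ≤ _ := by
      refine sum_le_pow_mul (card_filter_powerset_le_two_pow _ _) (one_le_pow₀ one_le_two)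
        (by positivity) fun t ht => ?_
      obtain ⟨hts, ht2⟩ : t ⊆ s ∧ 2 ≤ #t := by simpa using ht
      have hst : s \ t ⊂ s := sdiff_ssubset hts (card_pos.1 (by omega))
      have hcard : (#(s \ t) : ℝ) + #t = #s := by exact_mod_cast card_sdiff_add_card_eq_card hts
      refine ⟨#(s \ t), card_lt_card hst, ?_⟩
      calc ((nondegZeroSumOn 𝓔 t).ncard : ℝ) * (zeroSumOn 𝓔 (s \ t)).ncard
          ≤ (#𝓔 : ℝ) ^ ((#t : ℝ) / 2) *
              (((2 : ℝ) ^ Fintype.card ι) ^ #(s \ t) * (#𝓔 : ℝ) ^ ((#(s \ t) : ℝ) / 2)) :=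
            mul_le_mul (hblock t ht2) (ih _ hst) (Nat.cast_nonneg _) (by positivity)
        _ = ((2 : ℝ) ^ Fintype.card ι) ^ #(s \ t) * (#𝓔 : ℝ) ^ ((#s : ℝ) / 2) := by
          rw [mul_left_comm, ← Real.rpow_add' (Nat.cast_nonneg _) (by positivity), ← hcard]
          congr 2; ring

theorem ncard_nondegZeroSumOn_le_rpow_half [Finite ι] {γ : ℝ} (hW : 1 ≤ #𝓔) (hγ : γ ≤ 1 / 2)
    (hblock : ∀ t : Finset ι, 3 ≤ #t →
      ((nondegZeroSumOn 𝓔 t).ncard : ℝ) ≤ (#𝓔 : ℝ) ^ (γ * #t))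
    (ht : 2 ≤ #t) : ((nondegZeroSumOn 𝓔 t).ncard : ℝ) ≤ (#𝓔 : ℝ) ^ ((#t : ℝ) / 2) := by
  rcases ht.eq_or_lt with ht2 | ht3
  · rw [← ht2, Nat.cast_ofNat, div_self two_ne_zero, Real.rpow_one]
    exact_mod_cast (Set.ncard_le_ncard (Set.sep_subset _ _) (zeroSumOn_finite 𝓔 t)).trans
      (ncard_zeroSumOn_le_of_card_eq_two ht2.symm)
  · refine (hblock t ht3).trans (Real.rpow_le_rpow_of_exponent_le (by exact_mod_cast hW) ?_)
    nlinarith [(Nat.cast_nonneg #t : (0 : ℝ) ≤ #t)]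

-- A block of size `m ≥ 3` already pays the saving: `γ m - m / 2 ≤ -3 (1 / 2 - γ)`.
theorem ncard_nondegZeroSumOn_mul_ncard_zeroSumOn_sdiff_le [Fintype ι] [DecidableEq ι]
    {γ : ℝ} (h0 : (0 : G) ∉ 𝓔) (hW : 1 ≤ #𝓔) (hγ : γ ≤ 1 / 2)
    (hblock : ∀ t : Finset ι, 3 ≤ #t →
      ((nondegZeroSumOn 𝓔 t).ncard : ℝ) ≤ (#𝓔 : ℝ) ^ (γ * #t))
    (hts : t ⊆ s) (ht3 : 3 ≤ #t) :
    ((nondegZeroSumOn 𝓔 t).ncard : ℝ) * (zeroSumOn 𝓔 (s \ t)).ncard ≤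
      ((2 : ℝ) ^ Fintype.card ι) ^ #(s \ t) * (#𝓔 : ℝ) ^ ((#s : ℝ) / 2 - 3 * (1 / 2 - γ)) := by
  have hW' : (1 : ℝ) ≤ #𝓔 := by exact_mod_cast hW
  have hcard : (#(s \ t) : ℝ) + #t = #s := by exact_mod_cast card_sdiff_add_card_eq_card hts
  have ht3' : (3 : ℝ) ≤ #t := by exact_mod_cast ht3
  calc ((nondegZeroSumOn 𝓔 t).ncard : ℝ) * (zeroSumOn 𝓔 (s \ t)).ncard
      ≤ (#𝓔 : ℝ) ^ (γ * #t) * (((2 : ℝ) ^ Fintype.card ι) ^ #(s \ t) *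
          (#𝓔 : ℝ) ^ ((#(s \ t) : ℝ) / 2)) :=
        mul_le_mul (hblock t ht3) (ncard_zeroSumOn_le h0
          (fun t ht => ncard_nondegZeroSumOn_le_rpow_half hW hγ hblock ht) _)
          (Nat.cast_nonneg _) (by positivity)
    _ = ((2 : ℝ) ^ Fintype.card ι) ^ #(s \ t) * (#𝓔 : ℝ) ^ (γ * #t + (#(s \ t) : ℝ) / 2) := by
        rw [mul_left_comm, ← Real.rpow_add (by positivity)]
    _ ≤ ((2 : ℝ) ^ Fintype.card ι) ^ #(s \ t) *
          (#𝓔 : ℝ) ^ ((#s : ℝ) / 2 - 3 * (1 / 2 - γ)) := by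
        gcongr
        nlinarith

theorem unpairedZeroSumOn_empty (𝓔 : Finset G) : unpairedZeroSumOn 𝓔 (∅ : Finset ι) = ∅ :=
  Set.eq_empty_of_forall_notMem fun v hv => hv.2 (pairedOn_empty v)

theorem unpairedZeroSumOn_finite [Finite ι] (𝓔 : Finset G) (s : Finset ι) :
    (unpairedZeroSumOn 𝓔 s).Finite :=
  (zeroSumOn_finite 𝓔 s).subset (Set.sep_subset _ _)

theorem exists_block_of_mem_unpairedZeroSumOn [DecidableEq ι] (h0 : (0 : G) ∉ 𝓔)
    (hs : s.Nonempty) (hv : v ∈ unpairedZeroSumOn 𝓔 s) :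
    ∃ t ⊆ s, 2 ≤ #t ∧ (t : Set ι).indicator v ∈ nondegZeroSumOn 𝓔 t ∧
      ((s \ t : Finset ι) : Set ι).indicator v ∈
        if #t = 2 then unpairedZeroSumOn 𝓔 (s \ t) else zeroSumOn 𝓔 (s \ t) := by
  obtain ⟨t, hts, ht2, hblk, hrest⟩ := exists_nondegZeroSumOn_block h0 hs hv.1
  refine ⟨t, hts, ht2, hblk, ?_⟩
  split_ifs with h2
  · refine ⟨hrest, fun hpaired => hv.2 ?_⟩
    obtain ⟨i, j, hij, rfl⟩ := card_eq_two.1 h2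
    have hsum : v i + v j = 0 := by simpa [sum_pair hij, hij] using hblk.1.2.2
    have := (hpaired.congr fun x hx => Set.indicator_of_mem (mem_coe.2 hx) v).pair_union
      (by simp) (by simp) hij hsum
    rwa [union_sdiff_of_subset hts] at this
  · exact hrest

theorem ncard_unpairedZeroSumOn_le [Fintype ι] [DecidableEq ι] {γ : ℝ} (h0 : (0 : G) ∉ 𝓔)
    (hW : 1 ≤ #𝓔) (hγ : γ ≤ 1 / 2)
    (hblock : ∀ t : Finset ι, 3 ≤ #t →
      ((nondegZeroSumOn 𝓔 t).ncard : ℝ) ≤ (#𝓔 : ℝ) ^ (γ * #t))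
    (s : Finset ι) :
    ((unpairedZeroSumOn 𝓔 s).ncard : ℝ) ≤
      ((2 : ℝ) ^ Fintype.card ι) ^ #s * (#𝓔 : ℝ) ^ ((#s : ℝ) / 2 - 3 * (1 / 2 - γ)) := by
  induction s using Finset.strongInduction with | H s ih =>
  rcases s.eq_empty_or_nonempty with rfl | hs
  · rw [unpairedZeroSumOn_empty, Set.ncard_empty, Nat.cast_zero]
    positivity
  calc ((unpairedZeroSumOn 𝓔 s).ncard : ℝ)
      ≤ ∑ t ∈ s.powerset with 2 ≤ #t, ((nondegZeroSumOn 𝓔 t).ncard : ℝ) *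
          (if #t = 2 then unpairedZeroSumOn 𝓔 (s \ t) else zeroSumOn 𝓔 (s \ t)).ncard := by
        exact_mod_cast ncard_le_sum_of_exists_block (Set.sep_subset _ _) _
          (fun t _ => by split_ifs; exacts [unpairedZeroSumOn_finite _ _, zeroSumOn_finite _ _])
          fun v hv => exists_block_of_mem_unpairedZeroSumOn h0 hs hv
    _ ≤ _ := by
      refine sum_le_pow_mul (card_filter_powerset_le_two_pow _ _) (one_le_pow₀ one_le_two)
        (by positivity) fun t ht => ?_
      obtain ⟨hts, ht2⟩ : t ⊆ s ∧ 2 ≤ #t := by simpa using ht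
      have hst : s \ t ⊂ s := sdiff_ssubset hts (card_pos.1 (by omega))
      refine ⟨#(s \ t), card_lt_card hst, ?_⟩
      split_ifs with h2
      · have hcard : (#(s \ t) : ℝ) + #t = #s := by
          exact_mod_cast card_sdiff_add_card_eq_card hts
        calc ((nondegZeroSumOn 𝓔 t).ncard : ℝ) * (unpairedZeroSumOn 𝓔 (s \ t)).ncard
            ≤ (#𝓔 : ℝ) ^ ((#t : ℝ) / 2) * (((2 : ℝ) ^ Fintype.card ι) ^ #(s \ t) *
                (#𝓔 : ℝ) ^ ((#(s \ t) : ℝ) / 2 - 3 * (1 / 2 - γ))) :=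
              mul_le_mul (ncard_nondegZeroSumOn_le_rpow_half hW hγ hblock ht2) (ih _ hst)
                (Nat.cast_nonneg _) (by positivity)
          _ = ((2 : ℝ) ^ Fintype.card ι) ^ #(s \ t) *
                (#𝓔 : ℝ) ^ ((#s : ℝ) / 2 - 3 * (1 / 2 - γ)) := by
            rw [mul_left_comm, ← Real.rpow_add (by positivity), ← hcard]
            congr 2; ring
      · exact ncard_nondegZeroSumOn_mul_ncard_zeroSumOn_sdiff_le h0 hW hγ hblock hts (by omega)

end ZeroSumTuples

theorem ncard_nondegZeroSumOn_le_nondegenCount {ι : Type*} (𝓔 : Finset (ℤ × ℤ))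
    (t : Finset ι) : (nondegZeroSumOn 𝓔 t).ncard ≤ nondegenCount 𝓔 #t := by
  set e : Fin #t ↪ ι := t.equivFin.symm.toEmbedding.trans (Function.Embedding.subtype _)
  have he : ∀ k, e k ∈ t := fun k => (t.equivFin.symm k).2
  have hmap : ∀ s' : Finset (Fin #t), s'.map e ⊆ t := fun s' x hx => by
    obtain ⟨k, -, rfl⟩ := mem_map.1 hx
    exact he k
  have hmap_univ : univ.map e = t :=
    eq_of_subset_of_card_le (hmap univ) (by simp)
  refine Set.ncard_le_ncard_of_injOn (fun v k => v (e k)) (fun v hv => ⟨fun k => hv.1.1 _ (he k),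
    ?_, fun s' hs'ne hs'univ => ?_⟩) ?_ ?_
  · rw [← sum_map univ e v, hmap_univ]
    exact hv.1.2.2
  · rw [← sum_map s' e v]
    refine hv.2 _ ((hmap s').ssubset_of_ne fun h => hs'univ ?_) (hs'ne.map)
    exact eq_univ_of_card _ (by rw [← card_map e, h, Fintype.card_fin])
  · intro v hv w hw hvw
    funext x
    by_cases hx : x ∈ t
    · simpa [e] using congrFun hvw (t.equivFin ⟨x, hx⟩)
    · rw [hv.1.2.1 x hx, hw.1.2.1 x hx]
  · exact (Set.Finite.pi (t := fun _ => (𝓔 : Set (ℤ × ℤ))) fun _ => 𝓔.finite_toSet).subset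
      fun u hu k _ => hu.1 k

theorem paired_of_pairedOn_univ {ℓ : ℕ} {v : Fin ℓ → ℤ × ℤ} (h : PairedOn univ v) : Paired v := by
  obtain ⟨σ, hσ⟩ := h
  exact ⟨Function.Involutive.toPerm σ fun i => (hσ i (mem_univ i)).2.2.1,
    fun i => (hσ i (mem_univ i)).2.1, fun i => (hσ i (mem_univ i)).2.2.1,
    fun i => (hσ i (mem_univ i)).2.2.2⟩

theorem statement12_general (ℓ : ℕ) :
    ∃ C : ℝ, ∀ (γ : ℝ) (𝓔 : Finset (ℤ × ℤ)),
      0 < γ → γ < 1 / 2 → ((0 : ℤ), (0 : ℤ)) ∉ 𝓔 → 2 ≤ 𝓔.card →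
      (∀ ℓ' : ℕ, 3 ≤ ℓ' → ℓ' ≤ ℓ →
        (nondegenCount 𝓔 ℓ' : ℝ) ≤ (𝓔.card : ℝ) ^ (γ * (ℓ' : ℝ))) →
      (Set.ncard {v : Fin ℓ → ℤ × ℤ |
          (∀ i, v i ∈ 𝓔) ∧ (∑ i, v i = 0) ∧ ¬ Paired v} : ℝ) ≤
        C * (𝓔.card : ℝ) ^ ((ℓ : ℝ) / 2 - 3 * (1 / 2 - γ)) := by
  refine ⟨((2 : ℝ) ^ ℓ) ^ ℓ, fun γ 𝓔 _ hγ h0 hW hcond => ?_⟩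
  have hblock : ∀ t : Finset (Fin ℓ), 3 ≤ #t →
      ((nondegZeroSumOn 𝓔 t).ncard : ℝ) ≤ (#𝓔 : ℝ) ^ (γ * #t) := fun t ht =>
    (Nat.cast_le.2 (ncard_nondegZeroSumOn_le_nondegenCount 𝓔 t)).trans
      (hcond _ ht ((card_le_univ t).trans_eq (Fintype.card_fin ℓ)))
  have hsub : {v : Fin ℓ → ℤ × ℤ | (∀ i, v i ∈ 𝓔) ∧ (∑ i, v i = 0) ∧ ¬ Paired v} ⊆
      unpairedZeroSumOn 𝓔 univ := fun v ⟨hv𝓔, hsum, hunpaired⟩ =>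
    ⟨⟨fun i _ => hv𝓔 i, fun i hi => absurd (mem_univ i) hi, hsum⟩,
      fun hpaired => hunpaired (paired_of_pairedOn_univ hpaired)⟩
  calc _ ≤ ((unpairedZeroSumOn 𝓔 (univ : Finset (Fin ℓ))).ncard : ℝ) := by
        exact_mod_cast Set.ncard_le_ncard hsub (unpairedZeroSumOn_finite _ _)
    _ ≤ _ := by
        simpa using ncard_unpairedZeroSumOn_le h0 (by omega) hγ.le hblock univ

/-- counting non-paired zero-sum ℓ-tuples under condition I (key step of
Lemma 2). -/
theorem statement12 (ℓ : ℕ) (hℓ : 3 ≤ ℓ) :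
    ∃ C : ℝ, ∀ (γ : ℝ) (𝓔 : Finset (ℤ × ℤ)),
      0 < γ → γ < 1 / 2 → ((0 : ℤ), (0 : ℤ)) ∉ 𝓔 → 2 ≤ 𝓔.card →
      (∀ ℓ' : ℕ, 3 ≤ ℓ' → ℓ' ≤ ℓ →
        (nondegenCount 𝓔 ℓ' : ℝ) ≤ (𝓔.card : ℝ) ^ (γ * (ℓ' : ℝ))) →
      (Set.ncard {v : Fin ℓ → ℤ × ℤ |
          (∀ i, v i ∈ 𝓔) ∧ (∑ i, v i = 0) ∧ ¬ Paired v} : ℝ) ≤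
        C * (𝓔.card : ℝ) ^ ((ℓ : ℝ) / 2 - 3 * (1 / 2 - γ)) :=
  statement12_general ℓ
end
end
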